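/- Let Δ₅^{Bℓ} ⊂ ℝ² be the convex hull of (0,0), (5,0), (5,1), (4,3), (7/2,7/2) and let P₅(x,y) = 4·x³·y³·(x+y)²·(x−y)². Then ∫_{Δ₅^{Bℓ}} P₅(x,y) dxdy = 1553111579/2520. -/

import Mathlib

/-!
`Δ₅^{Bℓ}` is the region `0 ≤ x ≤ 5`, `0 ≤ y ≤ min (x, 7 - x, 11 - 2x)` under its three upper edges:
this region is convex (a concave roof over an interval) and contains the vertices, and conversely
a fan triangulation from the origin writes each of its points as a convex combination of vertices.
By Fubini the integral is `∫₀⁵ Q(x, min (x, 7 - x, 11 - 2x)) dx`, where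
`Q(x, u) = x⁷u⁴ - 4/3 x⁵u⁶ + 1/2 x³u⁸` is the primitive of `P₅(x, ·)` vanishing at `0`;
splitting `[0, 5]` at `7/2` and `4` leaves three polynomial integrals.
-/

open MeasureTheory Set

section Convex

variable {𝕜 E : Type*} [Field 𝕜] [LinearOrder 𝕜] [IsStrictOrderedRing 𝕜] [AddCommGroup E]
  [Module 𝕜 E] {s : Set E}

theorem Convex.add_add_smul_mem (hs : Convex 𝕜 s) {x y z : E}
    (hx : x ∈ s) (hy : y ∈ s) (hz : z ∈ s) {a b c : 𝕜} (ha : 0 ≤ a) (hb : 0 ≤ b) (hc : 0 ≤ c)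
    (habc : a + b + c = 1) : a • x + b • y + c • z ∈ s := by
  simpa [Fin.sum_univ_three] using hs.sum_mem (t := Finset.univ) (w := ![a, b, c])
    (z := ![x, y, z]) (by simp [Fin.forall_fin_succ, ha, hb, hc])
    (by simp [Fin.sum_univ_three, habc]) (by simp [Fin.forall_fin_succ, hx, hy, hz])

theorem convex_region_between_cc {φ ψ : E → 𝕜} (hφ : ConvexOn 𝕜 s φ) (hψ : ConcaveOn 𝕜 s ψ) :
    Convex 𝕜 {p : E × 𝕜 | p.1 ∈ s ∧ p.2 ∈ Icc (φ p.1) (ψ p.1)} := by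
  rintro ⟨x, u⟩ ⟨hx, hφx, hxψ⟩ ⟨y, v⟩ ⟨hy, hφy, hyψ⟩ a b ha hb hab
  refine ⟨hφ.1 hx hy ha hb hab, ?_, ?_⟩
  · calc φ (a • x + b • y) ≤ a • φ x + b • φ y := hφ.2 hx hy ha hb hab
      _ ≤ a • u + b • v := by gcongr
  · calc a • u + b • v ≤ a • ψ x + b • ψ y := by gcongr
      _ ≤ ψ (a • x + b • y) := hψ.2 hx hy ha hb hab

end Convex

theorem setIntegral_region_between_cc {α E : Type*} [MeasurableSpace α] {μ : Measure α}
    [SigmaFinite μ] [NormedAddCommGroup E] [NormedSpace ℝ E] {s : Set α} {φ ψ : α → ℝ}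
    {f : α × ℝ → E} (hs : MeasurableSet s) (hφ : Measurable φ) (hψ : Measurable ψ)
    (hf : IntegrableOn f {p | p.1 ∈ s ∧ p.2 ∈ Icc (φ p.1) (ψ p.1)} (μ.prod volume)) :
    ∫ p in {p : α × ℝ | p.1 ∈ s ∧ p.2 ∈ Icc (φ p.1) (ψ p.1)}, f p ∂μ.prod volume
      = ∫ x in s, (∫ y in Icc (φ x) (ψ x), f (x, y)) ∂μ := by
  have hR := measurableSet_region_between_cc hφ hψ hs
  rw [← integral_indicator hR, integral_prod _ (hf.integrable_indicator hR),
    ← integral_indicator hs]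
  congr 1 with x
  by_cases hx : x ∈ s
  · rw [indicator_of_mem hx, ← integral_indicator measurableSet_Icc]
    congr 1 with y
    simp only [indicator, mem_Icc, mem_ofPred_eq, hx, true_and]
  · simp [hx]

namespace Delta5Blowup

def upperEdge (x : ℝ) : ℝ := min x (min (7 - x) (11 - 2 * x))

def polytope : Set (ℝ × ℝ) := {p | p.1 ∈ Icc 0 5 ∧ p.2 ∈ Icc 0 (upperEdge p.1)}

theorem concaveOn_upperEdge : ConcaveOn ℝ univ upperEdge :=
  (concaveOn_id convex_univ).inf
    (((concaveOn_const 7 convex_univ).sub (convexOn_id convex_univ)).inf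
      ((concaveOn_const 11 convex_univ).sub ((convexOn_id convex_univ).smul zero_le_two)))

@[fun_prop]
theorem continuous_upperEdge : Continuous upperEdge := by
  unfold upperEdge
  fun_prop

theorem upperEdge_nonneg {x : ℝ} (hx : x ∈ Icc (0 : ℝ) 5) : 0 ≤ upperEdge x := by
  unfold upperEdge
  grind

theorem upperEdge_of_le {x : ℝ} (hx : x ≤ 7 / 2) : upperEdge x = x := by
  unfold upperEdge
  grind

theorem upperEdge_of_mem_Icc {x : ℝ} (hx : x ∈ Icc (7 / 2 : ℝ) 4) : upperEdge x = 7 - x := by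
  unfold upperEdge
  grind

theorem upperEdge_of_ge {x : ℝ} (hx : 4 ≤ x) : upperEdge x = 11 - 2 * x := by
  unfold upperEdge
  grind

theorem convexHull_eq_polytope :
    convexHull ℝ {((0 : ℝ), (0 : ℝ)), (5, 0), (5, 1), (4, 3), (7 / 2, 7 / 2)} = polytope := by
  set V : Set (ℝ × ℝ) := {(0, 0), (5, 0), (5, 1), (4, 3), (7 / 2, 7 / 2)}
  apply subset_antisymm
  · refine convexHull_min ?_ ?_
    · simp only [V, insert_subset_iff, singleton_subset_iff]
      norm_num [polytope, upperEdge]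
    · exact convex_region_between_cc (convexOn_const 0 (convex_Icc 0 5))
        (concaveOn_upperEdge.subset (subset_univ _) (convex_Icc 0 5))
  · have hull := convex_convexHull ℝ V
    have vertex (v : ℝ × ℝ) (hv : v ∈ V) : v ∈ convexHull ℝ V := subset_convexHull ℝ V hv
    rintro ⟨x, y⟩ ⟨⟨hx0, hx5⟩, hy0, hy⟩
    simp only [upperEdge, le_min_iff] at hy
    -- fan triangulation from `(0, 0)` along the rays through `(5, 1)` and `(4, 3)`
    rcases le_total (5 * y) x with h₁ | h₁
    · convert hull.add_add_smul_mem (vertex (0, 0) (by simp [V])) (vertex (5, 0) (by simp [V]))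
        (vertex (5, 1) (by simp [V])) (a := 1 - x / 5) (b := x / 5 - y) (c := y)
        (by linarith) (by linarith) hy0 (by ring) using 1
      ext <;> simp only [Prod.fst_add, Prod.snd_add, Prod.smul_fst, Prod.smul_snd, smul_eq_mul]
        <;> ring
    rcases le_total (4 * y) (3 * x) with h₂ | h₂
    · convert hull.add_add_smul_mem (vertex (0, 0) (by simp [V])) (vertex (5, 1) (by simp [V]))
        (vertex (4, 3) (by simp [V]))
        (a := 1 - (2 * x + y) / 11) (b := (3 * x - 4 * y) / 11) (c := (5 * y - x) / 11)
        (by linarith) (by linarith) (by linarith) (by ring) using 1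
      ext <;> simp only [Prod.fst_add, Prod.snd_add, Prod.smul_fst, Prod.smul_snd, smul_eq_mul]
        <;> ring
    · convert hull.add_add_smul_mem (vertex (0, 0) (by simp [V])) (vertex (4, 3) (by simp [V]))
        (vertex (7 / 2, 7 / 2) (by simp [V]))
        (a := 1 - (x + y) / 7) (b := x - y) (c := (8 * y - 6 * x) / 7)
        (by linarith) (by linarith) (by linarith) (by ring) using 1
      ext <;> simp only [Prod.fst_add, Prod.snd_add, Prod.smul_fst, Prod.smul_snd, smul_eq_mul]
        <;> ring

theorem isCompact_polytope : IsCompact polytope := by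
  rw [← convexHull_eq_polytope]
  exact (toFinite _).isCompact_convexHull (𝕜 := ℝ)

def P₅ (p : ℝ × ℝ) : ℝ := 4 * p.1 ^ 3 * p.2 ^ 3 * (p.1 + p.2) ^ 2 * (p.1 - p.2) ^ 2

@[fun_prop]
theorem continuous_P₅ : Continuous P₅ := by
  unfold P₅
  fun_prop

noncomputable def primitiveP₅ (x y : ℝ) : ℝ :=
  x ^ 7 * y ^ 4 - 4 / 3 * x ^ 5 * y ^ 6 + 1 / 2 * x ^ 3 * y ^ 8

theorem hasDerivAt_primitiveP₅ (x y : ℝ) : HasDerivAt (primitiveP₅ x) (P₅ (x, y)) y := by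
  refine ((((hasDerivAt_pow 4 y).const_mul (x ^ 7)).sub
    ((hasDerivAt_pow 6 y).const_mul (4 / 3 * x ^ 5))).add
    ((hasDerivAt_pow 8 y).const_mul (1 / 2 * x ^ 3))).congr_deriv ?_
  simp only [P₅]
  push_cast
  ring

theorem setIntegral_P₅_Icc (x : ℝ) {u : ℝ} (hu : 0 ≤ u) :
    ∫ y in Icc 0 u, P₅ (x, y) = primitiveP₅ x u := by
  rw [integral_Icc_eq_integral_Ioc, ← intervalIntegral.integral_of_le hu,
    intervalIntegral.integral_eq_sub_of_hasDerivAt (fun y _ => hasDerivAt_primitiveP₅ x y)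
      ((by fun_prop : Continuous fun y => P₅ (x, y)).intervalIntegrable _ _)]
  simp [primitiveP₅]

theorem integral_primitiveP₅_upperEdge :
    ∫ x in (0 : ℝ)..5, primitiveP₅ x (upperEdge x) = 1553111579 / 2520 := by
  have hint (a b : ℝ) : IntervalIntegrable (fun x => primitiveP₅ x (upperEdge x)) volume a b :=
    (by unfold primitiveP₅; fun_prop : Continuous _).intervalIntegrable _ _
  have h₁ : ∫ x in (0 : ℝ)..7 / 2, primitiveP₅ x (upperEdge x)
      = ∫ x in (0 : ℝ)..7 / 2, primitiveP₅ x x :=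
    intervalIntegral.integral_congr fun x hx => by
      rw [uIcc_of_le (by norm_num)] at hx
      rw [upperEdge_of_le hx.2]
  have h₂ : ∫ x in (7 / 2 : ℝ)..4, primitiveP₅ x (upperEdge x)
      = ∫ x in (7 / 2 : ℝ)..4, primitiveP₅ x (7 - x) :=
    intervalIntegral.integral_congr fun x hx => by
      rw [uIcc_of_le (by norm_num)] at hx
      rw [upperEdge_of_mem_Icc hx]
  have h₃ : ∫ x in (4 : ℝ)..5, primitiveP₅ x (upperEdge x)
      = ∫ x in (4 : ℝ)..5, primitiveP₅ x (11 - 2 * x) :=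
    intervalIntegral.integral_congr fun x hx => by
      rw [uIcc_of_le (by norm_num)] at hx
      rw [upperEdge_of_ge hx.1]
  rw [← intervalIntegral.integral_add_adjacent_intervals (hint 0 (7 / 2)) (hint (7 / 2) 5),
    ← intervalIntegral.integral_add_adjacent_intervals (hint (7 / 2) 4) (hint 4 5), h₁, h₂, h₃]
  simp only [primitiveP₅]
  -- `ring_nf` expands each integrand into monomials `x ^ n * c`
  ring_nf
  simp (disch := exact Continuous.intervalIntegrable (by fun_prop) _ _) only
    [intervalIntegral.integral_add, intervalIntegral.integral_sub,
      intervalIntegral.integral_mul_const, integral_pow]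
  norm_num

end Delta5Blowup

open Delta5Blowup

/-- The Duistermaat–Heckman volume of the moment polytope `Δ₅^{Bℓ}` of the blow-up
`Bℓ_Z(X₅)`: `∫_{Δ₅^{Bℓ}} 4x³y³(x+y)²(x−y)² dxdy = 1553111579/2520`. -/
theorem volume_Delta5_blowup :
    let Δ : Set (ℝ × ℝ) := convexHull ℝ
      {((0 : ℝ), (0 : ℝ)), (5, 0), (5, 1), (4, 3), (7 / 2, 7 / 2)}
    let P : ℝ × ℝ → ℝ := fun p =>
      4 * p.1 ^ 3 * p.2 ^ 3 * (p.1 + p.2) ^ 2 * (p.1 - p.2) ^ 2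
    (∫ p in Δ, P p) = 1553111579 / 2520 := by
  intro Δ P
  rw [show Δ = polytope from convexHull_eq_polytope]
  change ∫ p in polytope, P₅ p = _
  rw [Measure.volume_eq_prod, polytope,
    setIntegral_region_between_cc measurableSet_Icc measurable_const
      continuous_upperEdge.measurable
      (continuous_P₅.continuousOn.integrableOn_compact isCompact_polytope),
    setIntegral_congr_fun measurableSet_Icc fun x hx => setIntegral_P₅_Icc x (upperEdge_nonneg hx),
    integral_Icc_eq_integral_Ioc, ← intervalIntegral.integral_of_le (by norm_num),
    integral_primitiveP₅_upperEdge]
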